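/- Let G be a Δ-regular n-vertex graph and let F be the family of all supersets of maximal bipartite-inducing vertex sets of G. Then |F| ≤ (2^{Δ+1} − Δ − 1)^{n/(Δ+1)}, i.e. |F|^{Δ+1} ≤ (2^{Δ+1} − Δ − 1)^n. -/

import Mathlib

/-!
Chung–Frankl–Graham–Shearer: if every point lies in at least `k` of the sets `A i`, then
`|𝒜| ^ k ≤ ∏ i, |{S ∩ A i | S ∈ 𝒜}|`. It is proved by splitting `𝒜` on a point `a`; on the `k`
sets `A i ∋ a` the traces of the two halves are disjoint inside the trace of `𝒜`, and the halves
recombine by the superadditivity `(∏ f)^(1/k) + (∏ g)^(1/k) ≤ (∏ (f + g))^(1/k)` of the geometric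
mean, a consequence of AM-GM.

Apply it to the closed neighbourhoods `N[v]`; every vertex lies in exactly `Δ + 1` of them. If
`B ⊆ T` with `B` maximal bipartite-inducing and `v ∉ T`, then `v` has two neighbours in `B`, since
otherwise `B ∪ {v}` would still induce a bipartite graph. So the trace `T ∩ N[v]` is none of
`∅, {u₁}, …, {u_Δ}`, and each trace family has at most `2 ^ (Δ + 1) - Δ - 1` members.
-/

open Finset
open scoped NNReal

namespace NNReal

variable {ι : Type*}

theorem geom_mean_add_geom_mean_le {s : Finset ι} (hs : s.Nonempty) (f g : ι → ℝ≥0) :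
    (∏ i ∈ s, f i) ^ (#s : ℝ)⁻¹ + (∏ i ∈ s, g i) ^ (#s : ℝ)⁻¹
      ≤ (∏ i ∈ s, (f i + g i)) ^ (#s : ℝ)⁻¹ := by
  have hr : (#s : ℝ)⁻¹ ≠ 0 := by simp [hs.ne_empty]
  by_cases hzero : ∃ i ∈ s, f i + g i = 0
  · obtain ⟨i, hi, hfg⟩ := hzero
    obtain ⟨hf, hg⟩ := add_eq_zero.mp hfg
    simp [prod_eq_zero hi hf, prod_eq_zero hi hg, zero_rpow hr]
  push Not at hzero
  set h : ι → ℝ≥0 := fun i ↦ f i + g i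
  have hh : (∏ i ∈ s, h i) ^ (#s : ℝ)⁻¹ ≠ 0 :=
    (rpow_pos (pos_of_ne_zero (prod_ne_zero_iff.mpr hzero))).ne'
  have hw : ∑ _i ∈ s, (#s : ℝ≥0)⁻¹ = 1 := by simp [hs.ne_empty]
  -- AM-GM for the ratios `φ i / h i`; for `φ = f` and `φ = g` the arithmetic means add up to `1`.
  have amgm (φ : ι → ℝ≥0) : (∏ i ∈ s, φ i) ^ (#s : ℝ)⁻¹
      ≤ (∑ i ∈ s, (#s : ℝ≥0)⁻¹ * (φ i / h i)) * (∏ i ∈ s, h i) ^ (#s : ℝ)⁻¹ := by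
    have := geom_mean_le_arith_mean_weighted s _ (fun i ↦ φ i / h i) hw
    rw [← div_le_iff₀ (pos_of_ne_zero hh), ← div_rpow, ← prod_div_distrib, ← finsetProd_rpow]
    simpa using this
  have hsum : ∑ i ∈ s, (#s : ℝ≥0)⁻¹ * (f i / h i) + ∑ i ∈ s, (#s : ℝ≥0)⁻¹ * (g i / h i) = 1 := by
    rw [← sum_add_distrib, ← hw]
    refine sum_congr rfl fun i hi ↦ ?_
    rw [← mul_add, ← add_div, div_self (hzero i hi), mul_one]
  calc _ ≤ (∑ i ∈ s, (#s : ℝ≥0)⁻¹ * (f i / h i) + ∑ i ∈ s, (#s : ℝ≥0)⁻¹ * (g i / h i))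
          * (∏ i ∈ s, h i) ^ (#s : ℝ)⁻¹ := by
        rw [add_mul]; exact add_le_add (amgm f) (amgm g)
    _ = _ := by rw [hsum, one_mul]

theorem add_pow_card_le_mul_prod_add {s : Finset ι} (hs : s.Nonempty) {a b c : ℝ≥0}
    {f g : ι → ℝ≥0} (ha : a ^ #s ≤ c * ∏ i ∈ s, f i) (hb : b ^ #s ≤ c * ∏ i ∈ s, g i) :
    (a + b) ^ #s ≤ c * ∏ i ∈ s, (f i + g i) := by
  have root {x y : ℝ≥0} : x ≤ y ^ (#s : ℝ)⁻¹ ↔ x ^ #s ≤ y := by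
    rw [le_rpow_inv_iff (by simpa using hs.card_pos), rpow_natCast]
  refine root.mp ?_
  calc a + b ≤ c ^ (#s : ℝ)⁻¹ * (∏ i ∈ s, f i) ^ (#s : ℝ)⁻¹
        + c ^ (#s : ℝ)⁻¹ * (∏ i ∈ s, g i) ^ (#s : ℝ)⁻¹ := by
        rw [← mul_rpow, ← mul_rpow]; exact add_le_add (root.mpr ha) (root.mpr hb)
    _ ≤ (c * ∏ i ∈ s, (f i + g i)) ^ (#s : ℝ)⁻¹ := by
        rw [← mul_add, mul_rpow]; gcongr; exact geom_mean_add_geom_mean_le hs f g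

end NNReal

theorem add_pow_card_le_prod {ι : Type*} [DecidableEq ι] {I K : Finset ι} (hKI : K ⊆ I)
    (hK : K.Nonempty) {a b : ℕ} {f g h : ι → ℕ} (hf : ∀ i ∈ I, f i ≤ h i)
    (hg : ∀ i ∈ I, g i ≤ h i) (hfg : ∀ i ∈ K, f i + g i ≤ h i)
    (ha : a ^ #K ≤ ∏ i ∈ I, f i) (hb : b ^ #K ≤ ∏ i ∈ I, g i) :
    (a + b) ^ #K ≤ ∏ i ∈ I, h i := by
  have split (φ : ι → ℕ) : ∏ i ∈ I, φ i = (∏ i ∈ I \ K, φ i) * ∏ i ∈ K, φ i :=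
    (prod_sdiff hKI).symm
  have bound {x : ℕ} {φ : ι → ℕ} (hφ : ∀ i ∈ I, φ i ≤ h i) (hx : x ^ #K ≤ ∏ i ∈ I, φ i) :
      (x : ℝ≥0) ^ #K ≤ ((∏ i ∈ I \ K, h i : ℕ) : ℝ≥0) * ∏ i ∈ K, (φ i : ℝ≥0) := by
    have : x ^ #K ≤ (∏ i ∈ I \ K, h i) * ∏ i ∈ K, φ i := by
      rw [split φ] at hx
      exact hx.trans (by gcongr with i hi; exact hφ i (mem_sdiff.mp hi).1)
    exact_mod_cast this
  have key : (a + b) ^ #K ≤ (∏ i ∈ I \ K, h i) * ∏ i ∈ K, (f i + g i) := by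
    exact_mod_cast NNReal.add_pow_card_le_mul_prod_add hK (bound hf ha) (bound hg hb)
  calc (a + b) ^ #K ≤ (∏ i ∈ I \ K, h i) * ∏ i ∈ K, (f i + g i) := key
    _ ≤ (∏ i ∈ I \ K, h i) * ∏ i ∈ K, h i := by gcongr with i hi; exact hfg i hi
    _ = ∏ i ∈ I, h i := (split h).symm

namespace Finset

variable {α : Type*} [DecidableEq α] {𝒜 : Finset (Finset α)} {A : Finset α} {a : α}

lemma image_inter_nonMemberSubfamily_subset :
    (𝒜.nonMemberSubfamily a).image (· ∩ A) ⊆ (𝒜.image (· ∩ A)).nonMemberSubfamily a := by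
  simp only [subset_iff, mem_image, mem_nonMemberSubfamily]
  rintro _ ⟨S, ⟨hS, haS⟩, rfl⟩
  exact ⟨⟨S, hS, rfl⟩, fun h ↦ haS (mem_inter.mp h).1⟩

lemma image_inter_memberSubfamily_subset (ha : a ∈ A) :
    (𝒜.memberSubfamily a).image (· ∩ A) ⊆ (𝒜.image (· ∩ A)).memberSubfamily a := by
  simp only [subset_iff, mem_image, mem_memberSubfamily]
  rintro _ ⟨S, ⟨hS, haS⟩, rfl⟩
  exact ⟨⟨insert a S, hS, insert_inter_of_mem ha⟩, fun h ↦ haS (mem_inter.mp h).1⟩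

lemma card_image_inter_nonMemberSubfamily_le :
    #((𝒜.nonMemberSubfamily a).image (· ∩ A)) ≤ #(𝒜.image (· ∩ A)) :=
  card_le_card (image_subset_image (filter_subset _ _))

lemma card_image_inter_memberSubfamily_le :
    #((𝒜.memberSubfamily a).image (· ∩ A)) ≤ #(𝒜.image (· ∩ A)) := by
  refine (card_le_card (t := (𝒜.image (· ∩ A)).image (erase · a)) ?_).trans card_image_le
  simp only [subset_iff, mem_image, mem_memberSubfamily]
  rintro _ ⟨S, ⟨hS, haS⟩, rfl⟩
  exact ⟨_, ⟨_, hS, rfl⟩, by rw [← erase_inter, erase_insert haS]⟩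

lemma card_image_inter_memberSubfamily_add_le (ha : a ∈ A) :
    #((𝒜.memberSubfamily a).image (· ∩ A)) + #((𝒜.nonMemberSubfamily a).image (· ∩ A))
      ≤ #(𝒜.image (· ∩ A)) :=
  (add_le_add (card_le_card (image_inter_memberSubfamily_subset ha))
    (card_le_card image_inter_nonMemberSubfamily_subset)).trans_eq
    (card_memberSubfamily_add_card_nonMemberSubfamily a _)

theorem card_pow_le_prod_card_image_inter {ι : Type*} (𝒜 : Finset (Finset α)) {I : Finset ι}
    {A : ι → Finset α} {k : ℕ} (hk : 0 < k) (hcov : ∀ a, k ≤ #{i ∈ I | a ∈ A i}) :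
    #𝒜 ^ k ≤ ∏ i ∈ I, #(𝒜.image (· ∩ A i)) := by
  classical
  induction 𝒜 using memberFamily_induction_on with
  | empty => simp [hk.ne']
  | singleton_empty => simp
  | @subfamily a 𝒜 h₀ h₁ =>
    obtain ⟨K, hK, rfl⟩ := exists_subset_card_eq (hcov a)
    rw [← card_memberSubfamily_add_card_nonMemberSubfamily a 𝒜]
    exact add_pow_card_le_prod (hK.trans (filter_subset _ _)) (card_pos.mp hk)
      (fun _ _ ↦ card_image_inter_memberSubfamily_le)
      (fun _ _ ↦ card_image_inter_nonMemberSubfamily_le)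
      (fun i hi ↦ card_image_inter_memberSubfamily_add_le (mem_filter.mp (hK hi)).2) h₁ h₀

end Finset

namespace SimpleGraph

variable {V : Type*} {G : SimpleGraph V}

lemma colorable_two_induce_insert {B : Set V} {v u : V} (hB : (G.induce B).Colorable 2)
    (hu : ∀ w ∈ B, G.Adj v w → w = u) : (G.induce (insert v B)).Colorable 2 := by
  classical
  obtain ⟨c⟩ := hB
  let cv : Fin 2 := if hu : u ∈ B then c ⟨u, hu⟩ + 1 else 0
  have hcv (w : V) (hw : w ∈ B) (hvw : G.Adj v w) : c ⟨w, hw⟩ ≠ cv := by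
    obtain rfl := hu w hw hvw
    simp [cv, hw]
  refine ⟨Coloring.mk (fun w ↦ if hw : (w : V) ∈ B then c ⟨w, hw⟩ else cv) ?_⟩
  rintro ⟨w, hw⟩ ⟨w', hw'⟩ (hadj : G.Adj w w')
  by_cases h₁ : w ∈ B <;> by_cases h₂ : w' ∈ B
  · simpa [h₁, h₂] using c.valid (show (G.induce B).Adj ⟨w, h₁⟩ ⟨w', h₂⟩ from hadj)
  · obtain rfl : w' = v := hw'.resolve_right h₂
    simpa [h₁, h₂] using hcv w h₁ hadj.symm
  · obtain rfl : w = v := hw.resolve_right h₁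
    simpa [h₁, h₂] using (hcv w' h₂ hadj).symm
  · obtain rfl : w = v := hw.resolve_right h₁
    obtain rfl : w' = w := hw'.resolve_right h₂
    exact (G.irrefl hadj).elim

lemma exists_adj_ne_of_maximal_colorable_two {B : Set V}
    (hB : Maximal (fun B : Set V ↦ (G.induce B).Colorable 2) B) {v : V} (hv : v ∉ B) (u : V) :
    ∃ w ∈ B, G.Adj v w ∧ w ≠ u := by
  by_contra! h
  exact hv (hB.mem_of_prop_insert (colorable_two_induce_insert hB.prop h))

lemma card_image_inter_insert_neighborFinset_le [Fintype V] [DecidableEq V] [DecidableRel G.Adj]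
    (v : V) {𝒯 : Finset (Finset V)} (h𝒯 : ∀ T ∈ 𝒯, v ∉ T → ∀ u, ∃ w ∈ T, G.Adj v w ∧ w ≠ u) :
    #(𝒯.image (· ∩ insert v (G.neighborFinset v))) ≤ 2 ^ (G.degree v + 1) - (G.degree v + 1) := by
  set N := insert v (G.neighborFinset v)
  set small : Finset (Finset V) := insert ∅ ((G.neighborFinset v).image ({·}))
  have hN : #N = G.degree v + 1 := by
    rw [card_insert_of_notMem (G.notMem_neighborFinset_self v), card_neighborFinset_eq_degree]
  have hsmall : #small = G.degree v + 1 := by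
    rw [card_insert_of_notMem (by simp), card_image_of_injective _ singleton_injective,
      card_neighborFinset_eq_degree]
  have hsmall_sub : small ⊆ N.powerset := by
    refine insert_subset (empty_mem_powerset _) fun _ hZ ↦ ?_
    obtain ⟨u, hu, rfl⟩ := mem_image.mp hZ
    exact mem_powerset.mpr (singleton_subset_iff.mpr (mem_insert_of_mem hu))
  have hsmall_mem (Z : Finset V) (hZ : Z ∈ small) : v ∉ Z ∧ ∃ u, Z ⊆ {u} := by
    simp only [small, mem_insert, mem_image, mem_neighborFinset] at hZ
    obtain rfl | ⟨u, hvu, rfl⟩ := hZ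
    · exact ⟨notMem_empty v, v, empty_subset _⟩
    · exact ⟨by simpa using hvu.ne, u, subset_rfl⟩
  have himage : 𝒯.image (· ∩ N) ⊆ N.powerset \ small := by
    simp only [subset_iff, mem_image, mem_sdiff, mem_powerset]
    rintro _ ⟨T, hT, rfl⟩
    refine ⟨inter_subset_right, fun h ↦ ?_⟩
    obtain ⟨hvZ, u, hsub⟩ := hsmall_mem _ h
    obtain ⟨w, hwT, hvw, hwu⟩ :=
      h𝒯 T hT (fun hvT ↦ hvZ (mem_inter.mpr ⟨hvT, mem_insert_self _ _⟩)) u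
    have hwN : w ∈ N := mem_insert_of_mem ((G.mem_neighborFinset v w).mpr hvw)
    exact hwu (mem_singleton.mp (hsub (mem_inter.mpr ⟨hwT, hwN⟩)))
  calc _ ≤ #(N.powerset \ small) := card_le_card himage
    _ = _ := by rw [card_sdiff_of_subset hsmall_sub, card_powerset, hN, hsmall]

lemma filter_mem_insert_neighborFinset [Fintype V] [DecidableEq V] [DecidableRel G.Adj] (a : V) :
    {v ∈ (univ : Finset V) | a ∈ insert v (G.neighborFinset v)} =
      insert a (G.neighborFinset a) := by
  ext v
  simp [eq_comm, G.adj_comm]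

end SimpleGraph

theorem upset_maximal_bipartite_bound
    {V : Type*} [Fintype V] (G : SimpleGraph V) [DecidableRel G.Adj]
    (Δ : ℕ) (hreg : G.IsRegularOfDegree Δ) :
    Nat.card {T : Set V // ∃ B : Set V,
        ((G.induce B).Colorable 2 ∧
          ∀ B' : Set V, B ⊆ B' → (G.induce B').Colorable 2 → B' = B) ∧
        B ⊆ T} ^ (Δ + 1)
      ≤ (2 ^ (Δ + 1) - Δ - 1) ^ (Fintype.card V) := by
  classical
  set 𝔽 : Finset (Finset V) := {T | ∃ B : Set V,
    ((G.induce B).Colorable 2 ∧ ∀ B' : Set V, B ⊆ B' → (G.induce B').Colorable 2 → B' = B) ∧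
    B ⊆ T}
  have htrace (v : V) :
      #(𝔽.image (· ∩ insert v (G.neighborFinset v))) ≤ 2 ^ (Δ + 1) - Δ - 1 := by
    rw [Nat.sub_sub, ← hreg v]
    refine G.card_image_inter_insert_neighborFinset_le v fun T hT hvT u ↦ ?_
    obtain ⟨B, ⟨hcol, hmax⟩, hBT⟩ := (mem_filter.mp hT).2
    obtain ⟨w, hwB, hvw, hwu⟩ := SimpleGraph.exists_adj_ne_of_maximal_colorable_two
      ⟨hcol, fun B' hB' hBB' ↦ (hmax B' hBB' hB').le⟩ (fun hvB ↦ hvT (hBT hvB)) u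
    exact ⟨w, hBT hwB, hvw, hwu⟩
  have hcov (a : V) : Δ + 1 ≤ #{v ∈ univ | a ∈ insert v (G.neighborFinset v)} := by
    rw [G.filter_mem_insert_neighborFinset, card_insert_of_notMem (G.notMem_neighborFinset_self a),
      G.card_neighborFinset_eq_degree, hreg a]
  calc Nat.card _ ^ (Δ + 1) = #𝔽 ^ (Δ + 1) := by
        rw [← Nat.card_congr (Fintype.finsetEquivSet.subtypeEquiv fun _ ↦ Iff.rfl),
          Nat.card_eq_fintype_card, Fintype.card_subtype]
        rfl
    _ ≤ ∏ v, #(𝔽.image (· ∩ insert v (G.neighborFinset v))) :=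
      card_pow_le_prod_card_image_inter 𝔽 Δ.succ_pos hcov
    _ ≤ ∏ _v : V, (2 ^ (Δ + 1) - Δ - 1) := prod_le_prod' fun v _ ↦ htrace v
    _ = (2 ^ (Δ + 1) - Δ - 1) ^ Fintype.card V := by rw [prod_const, card_univ]
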